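/- Single-letterization of the DSC-stage rate (converse step for R_AR). Let ℳ be a finite set and φ : 𝒳^n → ℳ any function, and set M = φ(X^n). Then Σ_{i=1}^n I(X_i; (M, X^{i−1}, Y_{i+1}^n) | Z_i, Y_i) ≤ H(M | Z^n, Y^n) ≤ log₂|ℳ|. In particular, if |ℳ| ≤ 2^{nR_AR} then Σ_{i=1}^n I(X_i; U_{1,i} | Z_i, Y_i) ≤ nR_AR, where U_{1,i} = (M, X^{i−1}, Y_{i+1}^n). -/

import Mathlib

open scoped BigOperators

noncomputable section

namespace IRSC

attribute [local instance] Classical.propDecidable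

/-- A bundled finite alphabet. -/
structure FinAlph where
  carrier : Type
  [fin : Fintype carrier]

attribute [instance] FinAlph.fin

section Basic

variable {Ω α β γ : Type*} [Fintype Ω]

/-- `μ` is a probability mass function on the finite type `Ω`. -/
def IsPMF (μ : Ω → ℝ) : Prop := (∀ ω, 0 ≤ μ ω) ∧ ∑ ω, μ ω = 1

/-- The probability that the random variable `f` takes the value `a` under `μ`. -/
def probOf (μ : Ω → ℝ) (f : Ω → α) (a : α) : ℝ := ∑ ω, if f ω = a then μ ω else 0

/-- The expectation of the real-valued random variable `g` under `μ`. -/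
def expect (μ : Ω → ℝ) (g : Ω → ℝ) : ℝ := ∑ ω, μ ω * g ω

/-- The Shannon entropy (base 2) `H(f)` of a random variable `f` under `μ`. -/
def entropy [Fintype α] (μ : Ω → ℝ) (f : Ω → α) : ℝ :=
  -∑ a, probOf μ f a * Real.logb 2 (probOf μ f a)

/-- The conditional entropy `H(f | g)` under `μ`. -/
def condEntropy [Fintype α] [Fintype β] (μ : Ω → ℝ) (f : Ω → α) (g : Ω → β) : ℝ :=
  entropy μ (fun ω => (f ω, g ω)) - entropy μ g

/-- The conditional mutual information `I(f ; g | h)` under `μ`. -/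
def condMI [Fintype α] [Fintype β] [Fintype γ]
    (μ : Ω → ℝ) (f : Ω → α) (g : Ω → β) (h : Ω → γ) : ℝ :=
  condEntropy μ f h + condEntropy μ g h - condEntropy μ (fun ω => (f ω, g ω)) h

/-- `MarkovChain μ f g h` says that `f − g − h` forms a Markov chain under `μ`, i.e.
`f` and `h` are conditionally independent given `g`. -/
def MarkovChain (μ : Ω → ℝ) (f : Ω → α) (g : Ω → β) (h : Ω → γ) : Prop :=
  ∀ a b c,
    probOf μ (fun ω => (f ω, g ω, h ω)) (a, b, c) * probOf μ g b =
      probOf μ (fun ω => (f ω, g ω)) (a, b) * probOf μ (fun ω => (g ω, h ω)) (b, c)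

end Basic

/-- The i.i.d. distribution of `n` copies of `p`. -/
def iid {W : Type*} [Fintype W] (p : W → ℝ) (n : ℕ) : (Fin n → W) → ℝ :=
  fun w => ∏ i, p (w i)

/-- The past `(x_1, …, x_{i-1})` of a sequence `x` relative to position `i`. -/
def past {n : ℕ} {α : Type*} (i : Fin n) (x : Fin n → α) : {j : Fin n // j < i} → α :=
  fun j => x j.1

/-- The future `(x_{i+1}, …, x_n)` of a sequence `x` relative to position `i`. -/
def fut {n : ℕ} {α : Type*} (i : Fin n) (x : Fin n → α) : {j : Fin n // i < j} → α :=
  fun j => x j.1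

/-!
Since `M` is a function of `X^n`, `H(M | Z^n, Y^n) = H(X^n | Z^n, Y^n) - H(X^n | M, Z^n, Y^n)`.
Expanding both terms by the chain rule along `X_1, …, X_n`, the `i`-th term of the first is
`H(X_i | X^{i-1}, Z^n, Y^n) = H(X_i | Z_i, Y_i)`, because under the i.i.d. law the `i`-th letter is
independent of all the others, while the `i`-th term of the second is at most
`H(X_i | U_{1,i}, Z_i, Y_i)`, because `U_{1,i}` is a function of `(M, X^{i-1}, Z^n, Y^n)` and
conditioning reduces entropy. Subtracting termwise leaves `∑ᵢ I(X_i; U_{1,i} | Z_i, Y_i)`.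
-/

section Entropy

variable {Ω α β : Type*} [Fintype Ω] {μ : Ω → ℝ}

lemma IsPMF.nonempty (hμ : IsPMF μ) : Nonempty Ω := by
  by_contra h
  simpa [not_nonempty_iff.mp h] using hμ.2

lemma probOf_nonneg (hμ : ∀ ω, 0 ≤ μ ω) (f : Ω → α) (a : α) : 0 ≤ probOf μ f a :=
  Finset.sum_nonneg fun ω _ => by split_ifs <;> simp [hμ ω]

lemma probOf_le_probOf (hμ : ∀ ω, 0 ≤ μ ω) {f : Ω → α} {g : Ω → β} {a : α} {b : β}
    (h : ∀ ω, f ω = a → g ω = b) : probOf μ f a ≤ probOf μ g b :=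
  Finset.sum_le_sum fun ω _ => by
    by_cases hf : f ω = a
    · simp [hf, h ω hf]
    · simp only [hf, if_false]; split_ifs <;> simp [hμ ω]

lemma probOf_congr {f : Ω → α} {g : Ω → β} {a : α} {b : β}
    (h : ∀ ω, f ω = a ↔ g ω = b) : probOf μ f a = probOf μ g b :=
  Finset.sum_congr rfl fun ω _ => by simp only [h ω]

lemma sum_probOf_mul [Fintype α] (f : Ω → α) (F : α → ℝ) :
    ∑ a, probOf μ f a * F a = ∑ ω, μ ω * F (f ω) := by
  simp only [probOf, Finset.sum_mul, ite_mul, zero_mul]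
  rw [Finset.sum_comm]
  simp

lemma sum_probOf [Fintype α] (hμ : ∑ ω, μ ω = 1) (f : Ω → α) : ∑ a, probOf μ f a = 1 := by
  simpa [hμ] using sum_probOf_mul (μ := μ) f fun _ => 1

lemma sum_probOf_pair [Fintype α] (f : Ω → α) (g : Ω → β) (b : β) :
    ∑ a, probOf μ (fun ω => (f ω, g ω)) (a, b) = probOf μ g b := by
  simp only [probOf, Prod.ext_iff]
  rw [Finset.sum_comm]
  refine Finset.sum_congr rfl fun ω _ => ?_
  rw [Finset.sum_eq_single (f ω) (fun a _ ha => if_neg fun h => ha h.1.symm) (by simp)]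
  simp

lemma entropy_eq_sum [Fintype α] (f : Ω → α) :
    entropy μ f = -∑ ω, μ ω * Real.logb 2 (probOf μ f (f ω)) := by
  rw [entropy, sum_probOf_mul]

lemma entropy_congr [Fintype α] [Fintype β] {f : Ω → α} {g : Ω → β}
    (h : ∀ ω ω', f ω = f ω' ↔ g ω = g ω') : entropy μ f = entropy μ g := by
  simp only [entropy_eq_sum, probOf_congr fun ω' => h ω' _]

lemma entropy_const [Fintype α] (hμ : ∑ ω, μ ω = 1) (a : α) :
    entropy μ (fun _ => a) = 0 := by
  have hprob (b : α) : probOf μ (fun _ => a) b = if a = b then 1 else 0 := by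
    split_ifs with h <;> simp [probOf, h, hμ]
  simp [entropy, hprob, apply_ite (fun x : ℝ => x * Real.logb 2 x)]

lemma entropy_eq_sum_negMulLog [Fintype α] (f : Ω → α) :
    entropy μ f = (∑ a, Real.negMulLog (probOf μ f a)) / Real.log 2 := by
  simp only [entropy, Real.negMulLog, Real.logb, Finset.sum_div]
  rw [← Finset.sum_neg_distrib]
  exact Finset.sum_congr rfl fun a _ => by ring

end Entropy

lemma mul_logb_sub_logb_le {P Q : ℝ} (hP : 0 ≤ P) (hQ : 0 ≤ Q) (hPQ : P ≠ 0 → Q ≠ 0) :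
    P * (Real.logb 2 Q - Real.logb 2 P) ≤ (Q - P) / Real.log 2 := by
  rcases hP.eq_or_lt with rfl | hP
  · simpa using div_nonneg hQ (Real.log_nonneg one_le_two)
  have hQ : 0 < Q := hQ.lt_of_ne (hPQ hP.ne').symm
  rw [← Real.logb_div hQ.ne' hP.ne', Real.logb, mul_div_assoc', div_le_div_iff_of_pos_right
    (Real.log_pos one_lt_two)]
  calc P * Real.log (Q / P) ≤ P * (Q / P - 1) :=
        mul_le_mul_of_nonneg_left (Real.log_le_sub_one_of_pos (div_pos hQ hP)) hP.le
    _ = Q - P := by field_simp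

lemma sum_mul_logb_le_sum_mul_logb {ι : Type*} [Fintype ι] {P Q : ι → ℝ}
    (hP : ∀ i, 0 ≤ P i) (hQ : ∀ i, 0 ≤ Q i) (hP1 : ∑ i, P i = 1) (hQ1 : ∑ i, Q i ≤ 1)
    (hPQ : ∀ i, P i ≠ 0 → Q i ≠ 0) :
    ∑ i, P i * Real.logb 2 (Q i) ≤ ∑ i, P i * Real.logb 2 (P i) := by
  rw [← sub_nonpos, ← Finset.sum_sub_distrib]
  calc ∑ i, (P i * Real.logb 2 (Q i) - P i * Real.logb 2 (P i))
      ≤ ∑ i, (Q i - P i) / Real.log 2 := Finset.sum_le_sum fun i _ => by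
        rw [← mul_sub]; exact mul_logb_sub_logb_le (hP i) (hQ i) (hPQ i)
    _ = ((∑ i, Q i) - ∑ i, P i) / Real.log 2 := by rw [← Finset.sum_div, Finset.sum_sub_distrib]
    _ ≤ 0 := div_nonpos_of_nonpos_of_nonneg (by linarith) (Real.log_nonneg one_le_two)

section CondEntropy

variable {Ω α β γ : Type*} [Fintype Ω] [Fintype α] [Fintype β] [Fintype γ] {μ : Ω → ℝ}

lemma condEntropy_congr {α' β' : Type*} [Fintype α'] [Fintype β']
    {f : Ω → α} {f' : Ω → α'} {g : Ω → β} {g' : Ω → β'}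
    (hg : ∀ ω ω', g ω = g ω' ↔ g' ω = g' ω')
    (hfg : ∀ ω ω', f ω = f ω' ∧ g ω = g ω' ↔ f' ω = f' ω' ∧ g' ω = g' ω') :
    condEntropy μ f g = condEntropy μ f' g' := by
  rw [condEntropy, condEntropy, entropy_congr hg,
    entropy_congr (f := fun ω => (f ω, g ω)) (g := fun ω => (f' ω, g' ω))
      fun ω ω' => by simpa only [Prod.ext_iff] using hfg ω ω']

lemma condEntropy_congr_left {α' : Type*} [Fintype α'] {f : Ω → α} {f' : Ω → α'} {g : Ω → β}
    (hf : ∀ ω ω', f ω = f ω' ↔ f' ω = f' ω') : condEntropy μ f g = condEntropy μ f' g :=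
  condEntropy_congr (fun _ _ => Iff.rfl) fun ω ω' => and_congr_left fun _ => hf ω ω'

lemma condEntropy_congr_right {β' : Type*} [Fintype β'] {f : Ω → α} {g : Ω → β} {g' : Ω → β'}
    (hg : ∀ ω ω', g ω = g ω' ↔ g' ω = g' ω') : condEntropy μ f g = condEntropy μ f g' :=
  condEntropy_congr hg fun ω ω' => and_congr_right fun _ => hg ω ω'

lemma condEntropy_pair (f : Ω → α) (g : Ω → β) (h : Ω → γ) :
    condEntropy μ (fun ω => (f ω, g ω)) h
      = condEntropy μ f (fun ω => (g ω, h ω)) + condEntropy μ g h := by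
  have hassoc : entropy μ (fun ω => ((f ω, g ω), h ω)) = entropy μ (fun ω => (f ω, g ω, h ω)) :=
    entropy_congr fun ω ω' => by simp only [Prod.ext_iff, and_assoc]
  rw [condEntropy, condEntropy, condEntropy, hassoc]
  ring

lemma condMI_eq_sub (f : Ω → α) (g : Ω → β) (h : Ω → γ) :
    condMI μ f g h = condEntropy μ f h - condEntropy μ f (fun ω => (g ω, h ω)) := by
  rw [condMI, condEntropy_pair]
  ring

lemma condEntropy_eq_sum (f : Ω → α) (g : Ω → β) :
    condEntropy μ f g = ∑ ω, μ ω * (Real.logb 2 (probOf μ g (g ω))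
      - Real.logb 2 (probOf μ (fun ω' => (f ω', g ω')) (f ω, g ω))) := by
  rw [condEntropy, entropy_eq_sum, entropy_eq_sum, neg_sub_neg, ← Finset.sum_sub_distrib]
  simp only [mul_sub]

lemma sum_probOf_condIndep_coupling (hμ : ∑ ω, μ ω = 1) (f : Ω → α) (g : Ω → β) (h : Ω → γ) :
    ∑ x : α × β × γ, probOf μ (fun ω => (f ω, h ω)) (x.1, x.2.2)
      * probOf μ (fun ω => (g ω, h ω)) (x.2.1, x.2.2) / probOf μ h x.2.2 = 1 := by
  calc _ = ∑ c : γ, (∑ a : α, probOf μ (fun ω => (f ω, h ω)) (a, c))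
          * (∑ b : β, probOf μ (fun ω => (g ω, h ω)) (b, c)) / probOf μ h c := by
        simp only [Fintype.sum_prod_type, Finset.sum_mul_sum, Finset.sum_div]
        conv_rhs => rw [Finset.sum_comm]
        exact Finset.sum_congr rfl fun a _ => Finset.sum_comm
    _ = 1 := by simp only [sum_probOf_pair, mul_self_div_self, sum_probOf hμ]

/-- Gibbs' inequality against the coupling of `(f, h)` and `(g, h)` that is conditionally
independent given `h`. -/
lemma condEntropy_pair_le (hμ : IsPMF μ) (f : Ω → α) (g : Ω → β) (h : Ω → γ) :
    condEntropy μ f (fun ω => (g ω, h ω)) ≤ condEntropy μ f h := by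
  obtain ⟨hμ0, hμ1⟩ := hμ
  set t : Ω → α × β × γ := fun ω => (f ω, g ω, h ω)
  set P := probOf μ t
  set Pfh := probOf μ (fun ω => (f ω, h ω))
  set Pgh := probOf μ (fun ω => (g ω, h ω))
  set Ph := probOf μ h
  set Q : α × β × γ → ℝ := fun x => Pfh (x.1, x.2.2) * Pgh (x.2.1, x.2.2) / Ph x.2.2
  have hmarg_pos : ∀ x, P x ≠ 0 → 0 < Pfh (x.1, x.2.2) ∧ 0 < Pgh (x.2.1, x.2.2) ∧ 0 < Ph x.2.2 := by
    rintro ⟨a, b, c⟩ hx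
    have hP : 0 < P (a, b, c) := (probOf_nonneg hμ0 _ _).lt_of_ne' hx
    refine ⟨hP.trans_le ?_, hP.trans_le ?_, hP.trans_le ?_⟩ <;>
      exact probOf_le_probOf hμ0 fun ω hω => by simp_all [t, Prod.ext_iff]
  have hgibbs : ∑ x, P x * Real.logb 2 (Q x) ≤ ∑ x, P x * Real.logb 2 (P x) :=
    sum_mul_logb_le_sum_mul_logb (probOf_nonneg hμ0 t)
      (fun x => div_nonneg (mul_nonneg (probOf_nonneg hμ0 _ _) (probOf_nonneg hμ0 _ _))
        (probOf_nonneg hμ0 _ _))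
      (sum_probOf hμ1 t) (sum_probOf_condIndep_coupling hμ1 f g h).le
      fun x hx => by obtain ⟨h1, h2, h3⟩ := hmarg_pos x hx; positivity
  have hgap : condEntropy μ f h - condEntropy μ f (fun ω => (g ω, h ω))
      = ∑ x, P x * (Real.logb 2 (P x) - Real.logb 2 (Q x)) := by
    set L : α × β × γ → ℝ := fun x => Real.logb 2 (P x) - (Real.logb 2 (Pfh (x.1, x.2.2))
      + Real.logb 2 (Pgh (x.2.1, x.2.2)) - Real.logb 2 (Ph x.2.2))
    calc _ = ∑ ω, μ ω * L (t ω) := by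
          rw [condEntropy_eq_sum, condEntropy_eq_sum, ← Finset.sum_sub_distrib]
          exact Finset.sum_congr rfl fun ω _ => by simp only [L]; ring
      _ = ∑ x, P x * L x := (sum_probOf_mul t L).symm
      _ = _ := Finset.sum_congr rfl fun x _ => by
          rcases eq_or_ne (P x) 0 with hx | hx
          · simp [hx]
          obtain ⟨h1, h2, h3⟩ := hmarg_pos x hx
          rw [Real.logb_div (by positivity) h3.ne', Real.logb_mul h1.ne' h2.ne']
  rw [← sub_nonneg, hgap]
  simp only [mul_sub, Finset.sum_sub_distrib]
  linarith

lemma condEntropy_le_condEntropy_of_determines {β' : Type*} [Fintype β'] (hμ : IsPMF μ)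
    (f : Ω → α) {g : Ω → β} {g' : Ω → β'} (hdet : ∀ ω ω', g ω = g ω' → g' ω = g' ω') :
    condEntropy μ f g ≤ condEntropy μ f g' := by
  have hrefine : condEntropy μ f g = condEntropy μ f (fun ω => (g ω, g' ω)) :=
    condEntropy_congr_right fun ω ω' => by
      simpa only [Prod.ext_iff] using ⟨fun h => ⟨h, hdet _ _ h⟩, And.left⟩
  exact hrefine ▸ condEntropy_pair_le hμ f g g'

lemma condEntropy_const_right (hμ : ∑ ω, μ ω = 1) (f : Ω → α) (c : γ) :
    condEntropy μ f (fun _ => c) = entropy μ f := by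
  rw [condEntropy, entropy_const hμ, sub_zero]
  exact entropy_congr fun ω ω' => by simp

lemma condEntropy_le_entropy (hμ : IsPMF μ) (f : Ω → α) (g : Ω → β) :
    condEntropy μ f g ≤ entropy μ f :=
  condEntropy_const_right (γ := Unit) hμ.2 f () ▸
    condEntropy_le_condEntropy_of_determines hμ f fun _ _ _ => rfl

lemma entropy_le_logb_card (hμ : IsPMF μ) (f : Ω → α) :
    entropy μ f ≤ Real.logb 2 (Fintype.card α) := by
  have hcard : (0 : ℝ) < Fintype.card α := by
    have : Nonempty α := hμ.nonempty.map f
    exact_mod_cast Fintype.card_pos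
  have hgibbs := sum_mul_logb_le_sum_mul_logb (probOf_nonneg hμ.1 f)
    (fun _ => inv_nonneg.mpr hcard.le) (sum_probOf hμ.2 f)
    (by simp [mul_inv_cancel₀ hcard.ne']) (fun _ _ => inv_ne_zero hcard.ne')
  rw [← Finset.sum_mul, sum_probOf hμ.2, one_mul, Real.logb_inv] at hgibbs
  rw [entropy]
  linarith

lemma condEntropy_le_logb_card (hμ : IsPMF μ) (f : Ω → α) (g : Ω → β) :
    condEntropy μ f g ≤ Real.logb 2 (Fintype.card α) :=
  (condEntropy_le_entropy hμ f g).trans (entropy_le_logb_card hμ f)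

lemma condEntropy_eq_sub_of_determines {f : Ω → α} {m : Ω → β} (g : Ω → γ)
    (hdet : ∀ ω ω', f ω = f ω' → m ω = m ω') :
    condEntropy μ m g = condEntropy μ f g - condEntropy μ f (fun ω => (m ω, g ω)) := by
  have hjoint : condEntropy μ (fun ω => (f ω, m ω)) g = condEntropy μ f g :=
    condEntropy_congr_left fun ω ω' => by
      simpa only [Prod.ext_iff] using ⟨And.left, fun h => ⟨h, hdet _ _ h⟩⟩
  rw [← hjoint, condEntropy_pair]
  ring

lemma condEntropy_eq_zero_of_determines {f : Ω → α} {g : Ω → β}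
    (hdet : ∀ ω ω', g ω = g ω' → f ω = f ω') : condEntropy μ f g = 0 := by
  rw [condEntropy, sub_eq_zero]
  exact entropy_congr fun ω ω' => by
    simpa only [Prod.ext_iff] using ⟨And.right, fun h => ⟨hdet _ _ h, h⟩⟩

lemma condEntropy_pi_eq_sum {m : ℕ} (f : Fin m → Ω → α) (g : Ω → γ) :
    condEntropy μ (fun ω j => f j ω) g
      = ∑ i : Fin m, condEntropy μ (f i)
          (fun ω => ((fun j : {j : Fin m // j < i} => f j.1 ω), g ω)) := by
  let E (k : ℕ) : ℝ := condEntropy μ (fun ω (j : {j : Fin m // (j : ℕ) < k}) => f j.1 ω) g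
  have hstep (i : Fin m) : E (i + 1) - E i = condEntropy μ (f i)
      (fun ω => ((fun j : {j : Fin m // j < i} => f j.1 ω), g ω)) := by
    have hsplit : E (i + 1) = condEntropy μ
        (fun ω => (f i ω, fun j : {j : Fin m // (j : ℕ) < i} => f j.1 ω)) g :=
      condEntropy_congr_left fun ω ω' => by
        simp [funext_iff, Prod.ext_iff, le_iff_lt_or_eq, or_imp, forall_and, Fin.val_inj, and_comm]
    rw [hsplit, condEntropy_pair, add_sub_cancel_right]
    exact condEntropy_congr_right fun ω ω' => by simp [funext_iff, Prod.ext_iff]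
  have hfull : condEntropy μ (fun ω j => f j ω) g = E m :=
    condEntropy_congr_left fun ω ω' => by simp [funext_iff]
  have hempty : E 0 = 0 :=
    condEntropy_eq_zero_of_determines fun _ _ _ => funext fun j => absurd j.2 (Nat.not_lt_zero _)
  simp only [← hstep, hfull]
  rw [Fin.sum_univ_eq_sum_range (fun k => E (k + 1) - E k), Finset.sum_range_sub, hempty, sub_zero]

end CondEntropy

section Product

variable {Ω₁ Ω₂ α β γ : Type*} [Fintype Ω₁] [Fintype Ω₂] {μ₁ : Ω₁ → ℝ} {μ₂ : Ω₂ → ℝ}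

lemma probOf_prod (F : Ω₁ → α) (G : Ω₂ → β) (a : α) (b : β) :
    probOf (fun q : Ω₁ × Ω₂ => μ₁ q.1 * μ₂ q.2) (fun q => (F q.1, G q.2)) (a, b)
      = probOf μ₁ F a * probOf μ₂ G b := by
  simp only [probOf, Fintype.sum_prod_type, Finset.sum_mul_sum, Prod.ext_iff, ite_zero_mul_ite_zero]

lemma probOf_prod_fst (h₂ : ∑ y, μ₂ y = 1) (F : Ω₁ → α) (a : α) :
    probOf (fun q : Ω₁ × Ω₂ => μ₁ q.1 * μ₂ q.2) (fun q => F q.1) a = probOf μ₁ F a := by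
  rw [probOf_congr (g := fun q : Ω₁ × Ω₂ => (F q.1, (fun _ => ()) q.2)) (b := (a, ()))
    fun q => by simp, probOf_prod F fun _ => ()]
  simp [probOf, h₂]

variable [Fintype α] [Fintype β] [Fintype γ]

lemma entropy_prod (h₁ : ∑ x, μ₁ x = 1) (h₂ : ∑ y, μ₂ y = 1) (F : Ω₁ → α) (G : Ω₂ → β) :
    entropy (fun q : Ω₁ × Ω₂ => μ₁ q.1 * μ₂ q.2) (fun q => (F q.1, G q.2))
      = entropy μ₁ F + entropy μ₂ G := by
  simp only [entropy_eq_sum_negMulLog, Fintype.sum_prod_type, probOf_prod, Real.negMulLog_mul,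
    Finset.sum_add_distrib, ← Finset.sum_mul, ← Finset.mul_sum, sum_probOf h₁, sum_probOf h₂]
  ring

lemma entropy_prod_fst (h₂ : ∑ y, μ₂ y = 1) (F : Ω₁ → α) :
    entropy (fun q : Ω₁ × Ω₂ => μ₁ q.1 * μ₂ q.2) (fun q => F q.1) = entropy μ₁ F := by
  simp only [entropy, probOf_prod_fst h₂]

lemma condEntropy_prod_fst (h₂ : ∑ y, μ₂ y = 1) (F : Ω₁ → α) (G : Ω₁ → γ) :
    condEntropy (fun q : Ω₁ × Ω₂ => μ₁ q.1 * μ₂ q.2) (fun q => F q.1) (fun q => G q.1)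
      = condEntropy μ₁ F G := by
  rw [condEntropy, condEntropy, ← entropy_prod_fst h₂ G, ← entropy_prod_fst h₂ fun x => (F x, G x)]

lemma condEntropy_prod_of_indep (h₁ : ∑ x, μ₁ x = 1) (h₂ : ∑ y, μ₂ y = 1)
    (F : Ω₁ → α) (G : Ω₁ → γ) (R : Ω₂ → β) :
    condEntropy (fun q : Ω₁ × Ω₂ => μ₁ q.1 * μ₂ q.2) (fun q => F q.1) (fun q => (R q.2, G q.1))
      = condEntropy (fun q : Ω₁ × Ω₂ => μ₁ q.1 * μ₂ q.2) (fun q => F q.1) (fun q => G q.1) := by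
  rw [condEntropy_prod_fst h₂, condEntropy, condEntropy,
    entropy_congr (f := fun q : Ω₁ × Ω₂ => (F q.1, R q.2, G q.1))
      (g := fun q : Ω₁ × Ω₂ => ((F q.1, G q.1), R q.2))
      fun _ _ => by simp only [Prod.ext_iff]; tauto,
    entropy_congr (f := fun q : Ω₁ × Ω₂ => (R q.2, G q.1)) (g := fun q : Ω₁ × Ω₂ => (G q.1, R q.2))
      fun _ _ => by simp only [Prod.ext_iff]; tauto,
    entropy_prod h₁ h₂ (fun x => (F x, G x)) R, entropy_prod h₁ h₂ G R]
  ring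

end Product

lemma probOf_comp_equiv {Ω Ω' α : Type*} [Fintype Ω] [Fintype Ω'] {μ : Ω → ℝ} (e : Ω' ≃ Ω)
    (f : Ω → α) (a : α) : probOf (fun ω' => μ (e ω')) (fun ω' => f (e ω')) a = probOf μ f a :=
  e.sum_comp fun ω => if f ω = a then μ ω else 0

lemma condEntropy_comp_equiv {Ω Ω' α β : Type*} [Fintype Ω] [Fintype Ω'] [Fintype α]
    [Fintype β] {μ : Ω → ℝ} (e : Ω' ≃ Ω) (f : Ω → α) (g : Ω → β) :
    condEntropy (fun ω' => μ (e ω')) (fun ω' => f (e ω')) (fun ω' => g (e ω'))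
      = condEntropy μ f g := by
  simp only [condEntropy, entropy, probOf_comp_equiv (μ := μ) e g,
    probOf_comp_equiv (μ := μ) e fun ω => (f ω, g ω)]

section Iid

variable {W : Type*} [Fintype W] {p : W → ℝ}

lemma sum_prod_eq_one {ι : Type*} [Fintype ι] [DecidableEq ι] (hp : ∑ w, p w = 1) :
    ∑ r : ι → W, ∏ j, p (r j) = 1 := by
  rw [← Fintype.prod_sum fun _ w => p w]
  simp [hp]

lemma isPMF_iid (hp : IsPMF p) (n : ℕ) : IsPMF (iid p n) :=
  ⟨fun _ => Finset.prod_nonneg fun _ _ => hp.1 _, sum_prod_eq_one hp.2⟩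

lemma iid_funSplitAt_symm {n : ℕ} (i : Fin n) (q : W × ({j : Fin n // j ≠ i} → W)) :
    iid p n ((Equiv.funSplitAt i W).symm q) = p q.1 * ∏ j, p (q.2 j) := by
  rw [iid, Fintype.prod_eq_mul_prod_subtype_ne _ i]
  simp only [Equiv.funSplitAt_symm_apply, dif_pos]
  exact congrArg _ (Finset.prod_congr rfl fun j _ => by rw [dif_neg j.2])

lemma condEntropy_iid_coord {α γ : Type*} [Fintype α] [Fintype γ] (hp : ∑ w, p w = 1)
    {n : ℕ} (i : Fin n) (F : W → α) (G : W → γ) :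
    condEntropy (iid p n) (fun ω => F (ω i))
        (fun ω => ((fun j : {j : Fin n // j ≠ i} => ω j), G (ω i)))
      = condEntropy (iid p n) (fun ω => F (ω i)) (fun ω => G (ω i)) := by
  let e := (Equiv.funSplitAt i W).symm
  have hμ : (fun q => iid p n (e q)) = fun q => p q.1 * ∏ j, p (q.2 j) :=
    funext (iid_funSplitAt_symm i)
  have he_coord (q) : e q i = q.1 := by simp [e, Equiv.funSplitAt_symm_apply]
  have he_rest (q) : (fun j : {j : Fin n // j ≠ i} => e q j) = q.2 :=
    funext fun j => by simp [e, Equiv.funSplitAt_symm_apply, j.2]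
  rw [← condEntropy_comp_equiv e, ← condEntropy_comp_equiv e, hμ]
  simp only [he_coord, he_rest]
  exact condEntropy_prod_of_indep hp (sum_prod_eq_one hp) F G id

end Iid

lemma sum_condMI_le_condEntropy_message {𝒳 𝒴 𝒵 ℳ : Type*} [Fintype 𝒳] [Fintype 𝒴] [Fintype 𝒵]
    [Fintype ℳ] {p : 𝒳 × 𝒴 × 𝒵 → ℝ} (hp : IsPMF p) {n : ℕ} (φ : (Fin n → 𝒳) → ℳ) :
    ∑ i : Fin n, condMI (iid p n)
        (fun w => (w i).1)
        (fun w => (φ fun j => (w j).1, past i fun j => (w j).1, fut i fun j => (w j).2.1))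
        (fun w => ((w i).2.2, (w i).2.1))
      ≤ condEntropy (iid p n) (fun w => φ fun j => (w j).1)
          (fun w => ((fun j => (w j).2.2), (fun j => (w j).2.1))) := by
  have hμ := isPMF_iid hp n
  set C := fun w : Fin n → 𝒳 × 𝒴 × 𝒵 => ((fun j => (w j).2.2), (fun j => (w j).2.1))
  rw [condEntropy_eq_sub_of_determines (f := fun w j => (w j).1) C fun _ _ h => by rw [h],
    condEntropy_pi_eq_sum, condEntropy_pi_eq_sum, ← Finset.sum_sub_distrib]
  refine Finset.sum_le_sum fun i _ => ?_
  rw [condMI_eq_sub]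
  have hpast : condEntropy (iid p n) (fun w => (w i).1) (fun w => ((w i).2.2, (w i).2.1))
      ≤ condEntropy (iid p n) (fun w => (w i).1)
          (fun w => ((fun j : {j : Fin n // j < i} => (w j.1).1), C w)) := by
    rw [← condEntropy_iid_coord hp.2 i Prod.fst fun v => (v.2.2, v.2.1)]
    refine condEntropy_le_condEntropy_of_determines hμ _ fun w w' h => ?_
    simp only [C, Prod.ext_iff, funext_iff, Subtype.forall] at h ⊢
    obtain ⟨hrest, hz, hy⟩ := h
    refine ⟨fun j hj => (hrest j hj.ne).1, fun j => ?_, fun j => ?_⟩ <;>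
      by_cases hj : j = i <;> simp_all
  have hmessage : condEntropy (iid p n) (fun w => (w i).1)
        (fun w => ((fun j : {j : Fin n // j < i} => (w j.1).1), (φ fun j => (w j).1), C w))
      ≤ condEntropy (iid p n) (fun w => (w i).1)
          (fun w => ((φ fun j => (w j).1, past i fun j => (w j).1, fut i fun j => (w j).2.1),
            ((w i).2.2, (w i).2.1))) :=
    condEntropy_le_condEntropy_of_determines hμ _ fun w w' h => by
      simp only [C, past, fut, Prod.ext_iff, funext_iff] at h ⊢
      simp_all
  linarith

/-- **Single-letterization of the DSC-stage rate (converse step for `R_AR`).**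
For any function `M = φ(X^n)` into a finite message set,
`∑ᵢ I(X_i; (M, X^{i-1}, Y_{i+1}^n) | Z_i, Y_i) ≤ H(M | Z^n, Y^n) ≤ log₂|ℳ|`;
in particular if `|ℳ| ≤ 2^{n R_AR}` then `∑ᵢ I(X_i; U_{1,i} | Z_i, Y_i) ≤ n R_AR`. -/
theorem dsc_rate_single_letterization_AR
    {𝒳 𝒴 𝒵 : Type*} [Fintype 𝒳] [Fintype 𝒴] [Fintype 𝒵]
    (p : 𝒳 × 𝒴 × 𝒵 → ℝ) (hp : IsPMF p) (n : ℕ)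
    (M : FinAlph) (φ : (Fin n → 𝒳) → M.carrier) :
    -- ∑ᵢ I(X_i; U_{1,i} | Z_i, Y_i) ≤ H(M | Z^n, Y^n)
    (∑ i : Fin n, condMI (iid p n)
        (fun w => (w i).1)
        (fun w => (φ fun j => (w j).1, past i fun j => (w j).1, fut i fun j => (w j).2.1))
        (fun w => ((w i).2.2, (w i).2.1))
      ≤ condEntropy (iid p n) (fun w => φ fun j => (w j).1)
          (fun w => ((fun j => (w j).2.2), (fun j => (w j).2.1)))) ∧
    -- H(M | Z^n, Y^n) ≤ log₂ |ℳ|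
    (condEntropy (iid p n) (fun w => φ fun j => (w j).1)
        (fun w => ((fun j => (w j).2.2), (fun j => (w j).2.1)))
      ≤ Real.logb 2 (Fintype.card M.carrier)) ∧
    -- in particular, if |ℳ| ≤ 2^{n R_AR} then ∑ᵢ I(X_i; U_{1,i} | Z_i, Y_i) ≤ n R_AR
    (∀ RAR : ℝ, (Fintype.card M.carrier : ℝ) ≤ (2 : ℝ) ^ ((n : ℝ) * RAR) →
      ∑ i : Fin n, condMI (iid p n)
        (fun w => (w i).1)
        (fun w => (φ fun j => (w j).1, past i fun j => (w j).1, fut i fun j => (w j).2.1))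
        (fun w => ((w i).2.2, (w i).2.1)) ≤ (n : ℝ) * RAR) := by
  have hμ := isPMF_iid hp n
  have hsum := sum_condMI_le_condEntropy_message hp φ
  refine ⟨hsum, condEntropy_le_logb_card hμ _ _, fun RAR hRAR => ?_⟩
  obtain ⟨w⟩ := hμ.nonempty
  have hcard : (0 : ℝ) < Fintype.card M.carrier := by
    exact_mod_cast Fintype.card_pos_iff.mpr ⟨φ fun j => (w j).1⟩
  exact (hsum.trans (condEntropy_le_logb_card hμ _ _)).trans
    ((Real.logb_le_iff_le_rpow one_lt_two hcard).mpr hRAR)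

end IRSC
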